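/- arXiv:1905.02424 — 5 statements merged into one kernel-verified Lean document; each statement's English description precedes it below -/
import Mathlib

section
/- Let S be a finite set of n positive integers admitting a minimum solution A, B with |A| + |B| = ℓ, and suppose ℓ > n/2. Then all 2^{n-ℓ} subsets of Z = S \ (A ∪ B) have pairwise distinct sums; consequently the set Ψ = { Σ(X) : X ⊆ S and there exists Y ⊆ S with X ≠ Y and Σ(X) = Σ(Y) } has cardinality at least 2^{n-ℓ}. -/
/-!
Let `Z = S \ (A ∪ B)`. Two distinct subsets of `Z` with the same sum would, after removing their
common part, give a solution inside `Z`, of size at most `|Z| = n - ℓ < ℓ`, contradicting the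
minimality of `(A, B)`. So `Z` is dissociated, and for every `X ⊆ Z` the distinct sets `X ∪ A` and
`X ∪ B` have the common sum `Σ(X) + Σ(A)`: these are `2 ^ (n - ℓ)` distinct elements of `Ψ`.
-/

open Finset

namespace Finset

variable {α : Type*}

lemma card_sdiff_union_of_disjoint [DecidableEq α] {S A B : Finset α} (hA : A ⊆ S) (hB : B ⊆ S)
    (hdisj : Disjoint A B) : #(S \ (A ∪ B)) = #S - (#A + #B) := by
  rw [card_sdiff_of_subset (union_subset hA hB), card_union_of_disjoint hdisj]

section Monoid

variable [AddCommMonoid α]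

/-- The set `Ψ`. -/
def repeatedSubsetSums (S : Finset α) : Set α :=
  {s | ∃ X ⊆ S, ∑ a ∈ X, a = s ∧ ∃ Y ⊆ S, X ≠ Y ∧ ∑ a ∈ X, a = ∑ a ∈ Y, a}

lemma repeatedSubsetSums_finite (S : Finset α) : (repeatedSubsetSums S).Finite := by
  classical
  refine (S.powerset.image fun X ↦ ∑ a ∈ X, a).finite_toSet.subset ?_
  rintro _ ⟨X, hX, rfl, -⟩
  exact mem_image_of_mem _ (mem_powerset.2 hX)

variable [DecidableEq α] {S A B X : Finset α}

lemma sum_add_sum_mem_repeatedSubsetSums (hA : A ⊆ S) (hB : B ⊆ S) (hdisj : Disjoint A B)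
    (hAne : A.Nonempty) (hsum : ∑ a ∈ A, a = ∑ a ∈ B, a) (hX : X ⊆ S \ (A ∪ B)) :
    ∑ a ∈ X, a + ∑ a ∈ A, a ∈ repeatedSubsetSums S := by
  have hXA : Disjoint X A := disjoint_of_subset_left hX (disjoint_sdiff_self_left.mono_right
    subset_union_left)
  have hXB : Disjoint X B := disjoint_of_subset_left hX (disjoint_sdiff_self_left.mono_right
    subset_union_right)
  have hXS : X ⊆ S := hX.trans sdiff_subset
  refine ⟨X ∪ A, union_subset hXS hA, sum_union hXA, X ∪ B, union_subset hXS hB, ?_, ?_⟩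
  · obtain ⟨a, ha⟩ := hAne
    intro h
    have : a ∈ X ∪ B := h ▸ mem_union_right _ ha
    rcases mem_union.1 this with haX | haB
    · exact disjoint_left.1 hXA haX ha
    · exact disjoint_left.1 hdisj ha haB
  · rw [sum_union hXA, sum_union hXB, hsum]

end Monoid

lemma two_pow_card_le_ncard_repeatedSubsetSums {α : Type*} [AddCommGroup α] [DecidableEq α]
    {S A B : Finset α} (hA : A ⊆ S) (hB : B ⊆ S) (hdisj : Disjoint A B) (hAne : A.Nonempty)
    (hsum : ∑ a ∈ A, a = ∑ a ∈ B, a) (hZ : AddDissociated (↑(S \ (A ∪ B)) : Set α)) :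
    2 ^ #(S \ (A ∪ B)) ≤ (repeatedSubsetSums S).ncard := by
  set Z := S \ (A ∪ B)
  have hinj : Set.InjOn (fun X ↦ ∑ a ∈ X, a + ∑ a ∈ A, a) Z.powerset := fun X hX Y hY h ↦
    hZ (coe_subset.2 (mem_powerset.1 hX)) (coe_subset.2 (mem_powerset.1 hY)) (add_right_cancel h)
  have hsub : ↑(Z.powerset.image fun X ↦ ∑ a ∈ X, a + ∑ a ∈ A, a) ⊆ repeatedSubsetSums S := by
    intro _ h
    obtain ⟨X, hX, rfl⟩ := mem_image.1 h
    exact sum_add_sum_mem_repeatedSubsetSums hA hB hdisj hAne hsum (mem_powerset.1 hX)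
  calc 2 ^ #Z = #(Z.powerset.image fun X ↦ ∑ a ∈ X, a + ∑ a ∈ A, a) := by
        rw [card_image_of_injOn hinj, card_powerset]
    _ ≤ (repeatedSubsetSums S).ncard := by
        rw [← Set.ncard_coe_finset]
        exact Set.ncard_le_ncard hsub (repeatedSubsetSums_finite S)

section Ordered

variable [AddCommGroup α] [PartialOrder α] [IsOrderedAddMonoid α] {s t u : Finset α}

lemma nonempty_of_sum_eq_of_ne (hpos : ∀ a ∈ u, 0 < a) (hne : t ≠ u)
    (hsum : ∑ a ∈ t, a = ∑ a ∈ u, a) : t.Nonempty := by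
  rw [nonempty_iff_ne_empty]
  rintro rfl
  have hu : u.Nonempty := nonempty_iff_ne_empty.2 hne.symm
  exact (sum_pos hpos hu).ne' (by simpa using hsum.symm)

lemma addDissociated_of_forall_sum_ne (hpos : ∀ a ∈ s, 0 < a)
    (h : ∀ t ⊆ s, ∀ u ⊆ s, Disjoint t u → t.Nonempty → u.Nonempty →
      ∑ a ∈ t, a ≠ ∑ a ∈ u, a) :
    AddDissociated (s : Set α) := by
  by_contra hs
  obtain ⟨t, u, ht, hu, htu, hne, hsum⟩ := not_addDissociated_iff_exists_disjoint.1 hs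
  rw [coe_subset] at ht hu
  exact h t ht u hu htu (nonempty_of_sum_eq_of_ne (fun a ha ↦ hpos a (hu ha)) hne hsum)
    (nonempty_of_sum_eq_of_ne (fun a ha ↦ hpos a (ht ha)) hne.symm hsum.symm) hsum

lemma addDissociated_sdiff_union_of_minimal [DecidableEq α] {S A B : Finset α} (hpos : ∀ a ∈ S, 0 < a)
    (hA : A ⊆ S) (hB : B ⊆ S) (hdisj : Disjoint A B)
    (hmin : ∀ t u : Finset α, t ⊆ S → u ⊆ S → Disjoint t u → t.Nonempty → u.Nonempty →
      ∑ a ∈ t, a = ∑ a ∈ u, a → #A + #B ≤ #t + #u)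
    (hbal : #S < 2 * (#A + #B)) :
    AddDissociated (↑(S \ (A ∪ B)) : Set α) := by
  have hZ := card_sdiff_union_of_disjoint hA hB hdisj
  refine addDissociated_of_forall_sum_ne (fun a ha ↦ hpos a (sdiff_subset ha)) ?_
  intro t ht u hu htu htne hune hsum
  have hsize : #t + #u ≤ #(S \ (A ∪ B)) := by
    rw [← card_union_of_disjoint htu]
    exact card_le_card (union_subset ht hu)
  have := hmin t u (ht.trans sdiff_subset) (hu.trans sdiff_subset) htu htne hune hsum
  omega

end Ordered

end Finset

theorem stmt_1_general (S A B : Finset ℤ) (n ℓ : ℕ) (hn : S.card = n)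
    (hpos : ∀ a ∈ S, 0 < a)
    (hA : A ⊆ S) (hB : B ⊆ S) (hdisj : Disjoint A B)
    (hAne : A.Nonempty)
    (hsum : A.sum id = B.sum id) (hℓ : ℓ = A.card + B.card)
    (hmin : ∀ A' B' : Finset ℤ, A' ⊆ S → B' ⊆ S → Disjoint A' B' →
      A'.Nonempty → B'.Nonempty → A'.sum id = B'.sum id →
      ℓ ≤ A'.card + B'.card)
    (hbal : n < 2 * ℓ) :
    (∀ Z₁ Z₂ : Finset ℤ, Z₁ ⊆ S \ (A ∪ B) → Z₂ ⊆ S \ (A ∪ B) →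
      Z₁.sum id = Z₂.sum id → Z₁ = Z₂) ∧
    2 ^ (n - ℓ) ≤
      Set.ncard { s : ℤ | ∃ X ⊆ S, X.sum id = s ∧
        ∃ Y ⊆ S, X ≠ Y ∧ X.sum id = Y.sum id } := by
  subst hn hℓ
  have hZ := addDissociated_sdiff_union_of_minimal hpos hA hB hdisj hmin hbal
  refine ⟨fun Z₁ Z₂ h₁ h₂ h ↦ hZ (coe_subset.2 h₁) (coe_subset.2 h₂) h, ?_⟩
  rw [← card_sdiff_union_of_disjoint hA hB hdisj]
  exact two_pow_card_le_ncard_repeatedSubsetSums hA hB hdisj hAne hsum hZ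

theorem stmt_1 (S A B : Finset ℤ) (n ℓ : ℕ) (hn : S.card = n)
    (hpos : ∀ a ∈ S, 0 < a)
    (hA : A ⊆ S) (hB : B ⊆ S) (hdisj : Disjoint A B)
    (hAne : A.Nonempty) (hBne : B.Nonempty)
    (hsum : A.sum id = B.sum id) (hℓ : ℓ = A.card + B.card)
    (hmin : ∀ A' B' : Finset ℤ, A' ⊆ S → B' ⊆ S → Disjoint A' B' →
      A'.Nonempty → B'.Nonempty → A'.sum id = B'.sum id →
      ℓ ≤ A'.card + B'.card)
    (hbal : n < 2 * ℓ) :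
    (∀ Z₁ Z₂ : Finset ℤ, Z₁ ⊆ S \ (A ∪ B) → Z₂ ⊆ S \ (A ∪ B) →
      Z₁.sum id = Z₂.sum id → Z₁ = Z₂) ∧
    2 ^ (n - ℓ) ≤
      Set.ncard { s : ℤ | ∃ X ⊆ S, X.sum id = s ∧
        ∃ Y ⊆ S, X ≠ Y ∧ X.sum id = Y.sum id } :=
  stmt_1_general S A B n ℓ hn hpos hA hB hdisj hAne hsum hℓ hmin hbal
end

section
/- Let S be a finite set of n positive integers with a minimum solution A, B of size ℓ = |A| + |B| > n/2, and let Z = S \ (A ∪ B). If there existed distinct subsets Z₁, Z₂ ⊆ Z with Σ(Z₁) = Σ(Z₂), then Z₁ \ Z₂ and Z₂ \ Z₁ would form a solution of size strictly smaller than ℓ, contradicting minimality. -/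
/-!
Cancelling the common part of `Z₁` and `Z₂` preserves the equality of sums, positivity of the
elements forces both differences to be nonempty, and both lie in `Z`, which has only `n - ℓ < ℓ`
elements.
-/

open Finset

namespace Finset

variable {ι M : Type*} [DecidableEq ι]

theorem sdiff_nonempty_of_sum_eq [AddCommMonoid M] [PartialOrder M] [IsOrderedCancelAddMonoid M]
    {s t : Finset ι} {f : ι → M} (hf : ∀ i ∈ t, 0 < f i) (hst : s ≠ t)
    (h : ∑ i ∈ s, f i = ∑ i ∈ t, f i) : (s \ t).Nonempty := by
  rw [sdiff_nonempty]
  intro hsub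
  have hts : (t \ s).Nonempty := sdiff_nonempty.2 fun hts => hst (hsub.antisymm hts)
  have hpos : 0 < ∑ i ∈ t \ s, f i := sum_pos (fun i hi => hf i (mem_sdiff.1 hi).1) hts
  have hlt : ∑ i ∈ s, f i < ∑ i ∈ t, f i := by
    rw [← sum_sdiff hsub]
    exact lt_add_of_pos_left _ hpos
  exact hlt.ne h

theorem card_sdiff_add_card_sdiff_le {s t u : Finset ι} (hs : s ⊆ u) (ht : t ⊆ u) :
    #(s \ t) + #(t \ s) ≤ #u := by
  rw [← card_union_of_disjoint disjoint_sdiff_sdiff]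
  exact card_le_card (union_subset (sdiff_subset.trans hs) (sdiff_subset.trans ht))

end Finset

theorem stmt_2_general (S A B : Finset ℤ) (n ℓ : ℕ) (hn : S.card = n)
    (hpos : ∀ a ∈ S, 0 < a)
    (hA : A ⊆ S) (hB : B ⊆ S) (hdisj : Disjoint A B)
    (hℓ : ℓ = A.card + B.card)
    (hbal : n < 2 * ℓ) :
    ∀ Z₁ Z₂ : Finset ℤ, Z₁ ⊆ S \ (A ∪ B) → Z₂ ⊆ S \ (A ∪ B) →
      Z₁ ≠ Z₂ → Z₁.sum id = Z₂.sum id →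
      (Z₁ \ Z₂) ⊆ S ∧ (Z₂ \ Z₁) ⊆ S ∧ Disjoint (Z₁ \ Z₂) (Z₂ \ Z₁) ∧
      (Z₁ \ Z₂).Nonempty ∧ (Z₂ \ Z₁).Nonempty ∧
      (Z₁ \ Z₂).sum id = (Z₂ \ Z₁).sum id ∧
      (Z₁ \ Z₂).card + (Z₂ \ Z₁).card < ℓ := by
  intro Z₁ Z₂ h₁ h₂ hne hsum
  have hZ₁ : Z₁ ⊆ S := h₁.trans sdiff_subset
  have hZ₂ : Z₂ ⊆ S := h₂.trans sdiff_subset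
  have hcardZ : #(S \ (A ∪ B)) = n - ℓ := by
    rw [card_sdiff_of_subset (union_subset hA hB), card_union_of_disjoint hdisj, hn, hℓ]
  have hcard := card_sdiff_add_card_sdiff_le h₁ h₂
  refine ⟨sdiff_subset.trans hZ₁, sdiff_subset.trans hZ₂, disjoint_sdiff_sdiff,
    sdiff_nonempty_of_sum_eq (fun a ha => hpos a (hZ₂ ha)) hne hsum,
    sdiff_nonempty_of_sum_eq (fun a ha => hpos a (hZ₁ ha)) hne.symm hsum.symm,
    sum_sdiff_eq_sum_sdiff_iff.2 hsum, ?_⟩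
  omega

theorem stmt_2 (S A B : Finset ℤ) (n ℓ : ℕ) (hn : S.card = n)
    (hpos : ∀ a ∈ S, 0 < a)
    (hA : A ⊆ S) (hB : B ⊆ S) (hdisj : Disjoint A B)
    (hAne : A.Nonempty) (hBne : B.Nonempty)
    (hsum : A.sum id = B.sum id) (hℓ : ℓ = A.card + B.card)
    (hmin : ∀ A' B' : Finset ℤ, A' ⊆ S → B' ⊆ S → Disjoint A' B' →
      A'.Nonempty → B'.Nonempty → A'.sum id = B'.sum id →
      ℓ ≤ A'.card + B'.card)
    (hbal : n < 2 * ℓ) :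
    ∀ Z₁ Z₂ : Finset ℤ, Z₁ ⊆ S \ (A ∪ B) → Z₂ ⊆ S \ (A ∪ B) →
      Z₁ ≠ Z₂ → Z₁.sum id = Z₂.sum id →
      (Z₁ \ Z₂) ⊆ S ∧ (Z₂ \ Z₁) ⊆ S ∧ Disjoint (Z₁ \ Z₂) (Z₂ \ Z₁) ∧
      (Z₁ \ Z₂).Nonempty ∧ (Z₂ \ Z₁).Nonempty ∧
      (Z₁ \ Z₂).sum id = (Z₂ \ Z₁).sum id ∧
      (Z₁ \ Z₂).card + (Z₂ \ Z₁).card < ℓ :=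
  stmt_2_general S A B n ℓ hn hpos hA hB hdisj hℓ hbal
end

section
/- There exists a unique α ∈ (1/2, 1) with h(α) = α, where h is the binary entropy function, and this α satisfies α < 0.77291; consequently for all x ∈ [1/2, 1], min{ (h(x)+x)/2, x } ≤ α. -/
noncomputable def binEntropy (x : ℝ) : ℝ :=
  -x * Real.logb 2 x - (1 - x) * Real.logb 2 (1 - x)

lemma binEntropy_eq (x : ℝ) : binEntropy x = Real.binEntropy x / Real.log 2 := by
  unfold binEntropy Real.binEntropy
  rw [Real.logb, Real.logb, Real.log_inv, Real.log_inv]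
  ring

lemma one_sub_inv_le_log {y : ℝ} (hy : 0 < y) : 1 - 1/y ≤ Real.log y := by
  have := Real.log_le_sub_one_of_pos (x := y⁻¹) (by positivity)
  rw [Real.log_inv] at this
  have : -Real.log y ≤ y⁻¹ - 1 := this
  have hy' : (0:ℝ) < y⁻¹ := by positivity
  rw [one_div]
  linarith

lemma cont : Continuous binEntropy := by
  have : binEntropy = fun x => Real.binEntropy x / Real.log 2 := funext binEntropy_eq
  rw [this]
  exact Real.binEntropy_continuous.div_const _

lemma anti : StrictAntiOn binEntropy (Set.Icc (1/2 : ℝ) 1) := by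
  intro a ha b hb hab
  rw [binEntropy_eq, binEntropy_eq]
  have h2 : (0:ℝ) < Real.log 2 := Real.log_pos (by norm_num)
  have : Real.binEntropy b < Real.binEntropy a := by
    apply Real.binEntropy_strictAntiOn _ _ hab
    · simpa [one_div] using ha
    · simpa [one_div] using hb
  exact div_lt_div_of_pos_right this h2  -- name check

lemma numeric : binEntropy 0.77291 < 0.77291 := by
  have h2 : (0:ℝ) < Real.log 2 := Real.log_pos (by norm_num)
  rw [binEntropy_eq, div_lt_iff₀ h2]
  have hc : (0:ℝ) < 0.77291 := by norm_num
  have hd : (0:ℝ) < 0.22709 := by norm_num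
  have e1 : Real.log ((0.77291:ℝ)^35 * 2^13) = 35 * Real.log 0.77291 + 13 * Real.log 2 := by
    rw [Real.log_mul (by positivity) (by positivity), Real.log_pow, Real.log_pow]
    push_cast; ring
  have e2 : Real.log ((0.22709:ℝ)^29 * 2^62) = 29 * Real.log 0.22709 + 62 * Real.log 2 := by
    rw [Real.log_mul (by positivity) (by positivity), Real.log_pow, Real.log_pow]
    push_cast; ring
  have b1 : (1:ℝ) - 1/((0.77291:ℝ)^35 * 2^13) ≤ 35 * Real.log 0.77291 + 13 * Real.log 2 := by
    rw [← e1]; exact one_sub_inv_le_log (by positivity)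
  have b2 : (1:ℝ) - 1/((0.22709:ℝ)^29 * 2^62) ≤ 29 * Real.log 0.22709 + 62 * Real.log 2 := by
    rw [← e2]; exact one_sub_inv_le_log (by positivity)
  have r1 : (-0.004842:ℝ) ≤ 1 - 1/((0.77291:ℝ)^35 * 2^13) := by norm_num
  have r2 : (-0.014842:ℝ) ≤ 1 - 1/((0.22709:ℝ)^29 * 2^62) := by norm_num
  have l2u : Real.log 2 < 0.6931471808 := Real.log_two_lt_d9
  have l2l : (0.6931471803:ℝ) < Real.log 2 := Real.log_two_gt_d9
  have hb : Real.binEntropy 0.77291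
      = -(0.77291 * Real.log 0.77291) - 0.22709 * Real.log 0.22709 := by
    rw [Real.binEntropy, Real.log_inv, Real.log_inv]
    norm_num; ring
  rw [hb]
  linarith

theorem stmt_8 :
    ∃ α : ℝ, (α ∈ Set.Ioo (1 / 2 : ℝ) 1 ∧ binEntropy α = α) ∧
      (∀ β : ℝ, β ∈ Set.Ioo (1 / 2 : ℝ) 1 → binEntropy β = β → β = α) ∧
      α < 0.77291 ∧
      ∀ x ∈ Set.Icc (1 / 2 : ℝ) 1, min ((binEntropy x + x) / 2) x ≤ α := by
  have h2 : (0:ℝ) < Real.log 2 := Real.log_pos (by norm_num)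
  set F : ℝ → ℝ := fun x => binEntropy x - x with hF
  have hFcont : Continuous F := cont.sub continuous_id
  have hFhalf : F (1/2) = 1/2 := by
    have : binEntropy (1/2) = 1 := by
      rw [binEntropy_eq, show (1:ℝ)/2 = 2⁻¹ by norm_num, Real.binEntropy_two_inv,
        div_self h2.ne']
    simp only [hF]
    rw [this]; norm_num
  have hFone : F 1 = -1 := by
    simp [hF, binEntropy, Real.logb]
  have hFanti : StrictAntiOn F (Set.Icc (1/2 : ℝ) 1) := by
    intro a ha b hb hab
    have := anti ha hb hab
    simp only [hF]
    linarith
  -- existence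
  have hIVT := intermediate_value_Ioo' (a := (1/2:ℝ)) (b := 1) (by norm_num) hFcont.continuousOn
  have h0mem : (0:ℝ) ∈ Set.Ioo (F 1) (F (1/2)) := by
    rw [hFone, hFhalf]; norm_num
  obtain ⟨α, hαmem, hFα⟩ := hIVT h0mem
  have hαfix : binEntropy α = α := by
    have : binEntropy α - α = 0 := hFα
    linarith
  have hαIcc : α ∈ Set.Icc (1/2 : ℝ) 1 := Set.Ioo_subset_Icc_self hαmem
  -- bound
  have hcIcc : (0.77291:ℝ) ∈ Set.Icc (1/2 : ℝ) 1 := by norm_num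
  have hFc : F 0.77291 < 0 := by
    have := numeric; simp only [hF]; linarith
  have hαlt : α < 0.77291 := by
    by_contra h
    push_neg at h
    rcases eq_or_lt_of_le h with h' | h'
    · rw [h'] at hFc; linarith [hFα, hFc]
    · have := hFanti hcIcc hαIcc h'
      rw [hFα] at this; linarith
  -- α > 2/3
  have hF23 : 0 < F (2/3) := by
    have hlog : Real.log 16 < Real.log 27 := Real.log_lt_log (by norm_num) (by norm_num)
    have e16 : Real.log 16 = 4 * Real.log 2 := by
      rw [show (16:ℝ) = 2^4 by norm_num, Real.log_pow]; push_cast; ring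
    have e27 : Real.log 27 = 3 * Real.log 3 := by
      rw [show (27:ℝ) = 3^3 by norm_num, Real.log_pow]; push_cast; ring
    have hkey : 4 * Real.log 2 < 3 * Real.log 3 := by rw [← e16, ← e27]; exact hlog
    have hbe : Real.binEntropy (2/3) = Real.log 3 - (2/3) * Real.log 2 := by
      rw [Real.binEntropy]
      have : (1:ℝ) - 2/3 = 1/3 := by norm_num
      rw [this]
      rw [show ((2:ℝ)/3)⁻¹ = 3/2 by norm_num, show ((1:ℝ)/3)⁻¹ = 3 by norm_num,
        Real.log_div (by norm_num) (by norm_num)]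
      ring
    have : F (2/3) = (Real.log 3 - (2/3) * Real.log 2) / Real.log 2 - 2/3 := by
      simp only [hF, binEntropy_eq, hbe]
    rw [this]
    rw [lt_sub_iff_add_lt, lt_div_iff₀ h2]
    nlinarith
  have hα23 : (2/3 : ℝ) < α := by
    by_contra h
    push_neg at h
    rcases eq_or_lt_of_le h with h' | h'
    · rw [← h'] at hF23; linarith
    · have := hFanti hαIcc (by norm_num : (2/3:ℝ) ∈ Set.Icc (1/2:ℝ) 1) h'
      rw [hFα] at this; linarith
  -- antitone of binEntropy + id on [2/3, 1]
  have hφanti : StrictAntiOn (fun x => binEntropy x + x) (Set.Icc (2/3 : ℝ) 1) := by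
    apply strictAntiOn_of_deriv_neg (convex_Icc _ _) (cont.add continuous_id').continuousOn
    intro x hx
    rw [interior_Icc] at hx
    obtain ⟨hx1, hx2⟩ := hx
    have hx0 : x ≠ 0 := by positivity
    have hxne1 : x ≠ 1 := ne_of_lt hx2
    have hder : HasDerivAt (fun x => binEntropy x + x)
        ((Real.log (1 - x) - Real.log x) / Real.log 2 + 1) x := by
      have hb := ((Real.hasDerivAt_binEntropy hx0 hxne1).div_const (Real.log 2)).add
        (hasDerivAt_id x)
      have : (fun x => binEntropy x + x) = fun x => Real.binEntropy x / Real.log 2 + x := by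
        funext y; rw [binEntropy_eq]
      rw [this]
      exact hb
    rw [show (binEntropy + fun x => x) = (fun x => binEntropy x + x) from rfl, hder.deriv]
    have hpos : (0:ℝ) < 2 * (1 - x) := by linarith
    have hlt : 2 * (1 - x) < x := by linarith
    have := Real.log_lt_log hpos hlt
    rw [Real.log_mul (by norm_num) (by linarith : (1:ℝ) - x ≠ 0)] at this
    have hnum : Real.log (1 - x) - Real.log x < -Real.log 2 := by linarith
    have := div_lt_div_of_pos_right hnum h2
    rw [neg_div, div_self h2.ne'] at this
    linarith
  refine ⟨α, ⟨hαmem, hαfix⟩, ?_, hαlt, ?_⟩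
  · intro β hβ hβfix
    by_contra hne
    have hβIcc : β ∈ Set.Icc (1/2 : ℝ) 1 := Set.Ioo_subset_Icc_self hβ
    have hFβ : F β = 0 := by simp [hF, hβfix]
    rcases lt_or_gt_of_ne hne with h' | h'
    · have := hFanti hβIcc hαIcc h'; rw [hFα, hFβ] at this; linarith
    · have := hFanti hαIcc hβIcc h'; rw [hFα, hFβ] at this; linarith
  · intro x hx
    rcases le_or_gt x α with h | h
    · exact (min_le_right _ _).trans h
    · have hxIcc : x ∈ Set.Icc (2/3 : ℝ) 1 := ⟨by linarith, hx.2⟩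
      have hαIcc' : α ∈ Set.Icc (2/3 : ℝ) 1 := ⟨hα23.le, hαIcc.2⟩
      have := hφanti hαIcc' hxIcc h
      simp only at this
      rw [hαfix] at this
      calc min ((binEntropy x + x) / 2) x ≤ (binEntropy x + x) / 2 := min_le_left _ _
        _ ≤ α := by linarith
end

section
/- In the reduction instance S' (defined from a Subset-Sum instance (S,t) as above), if X ⊆ [n] satisfies Σ_{i∈X} aᵢ = t, then A = {sᵢ : i ∈ X} ∪ {s_{n+i} : i ∉ X} and B = {s_{n+i} : i ∈ X} ∪ {s_{2n+1}} are disjoint nonempty subsets of S' with Σ(A) = Σ(B). -/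
def reductionElem (n : ℕ) (a : Fin n → ℕ) (t : ℕ) :
    Fin n ⊕ Fin n ⊕ Unit → ℕ
  | Sum.inl i => a i * 10 ^ (n + 1) + 2 * 10 ^ (i.val + 1)
  | Sum.inr (Sum.inl i) => 10 ^ (i.val + 1)
  | Sum.inr (Sum.inr _) => t * 10 ^ (n + 1) + ∑ i : Fin n, 10 ^ (i.val + 1)

/-!
With `S i := 10 ^ (i + 1)`, `Σ(A) = (Σ_{i ∈ X} aᵢ) · 10^{n+1} + 2 Σ_{i ∈ X} S i + Σ_{i ∉ X} S i`
and `Σ(B) = Σ_{i ∈ X} S i + t · 10^{n+1} + Σ_i S i`; splitting `Σ_i S i` along `X` and using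
`Σ_{i ∈ X} aᵢ = t` makes the two agree. Written as iterated disjoint sums of finsets, `A` and `B`
are visibly disjoint, and `A ≠ ∅` since `X` and `Xᶜ` cannot both be empty when `n > 0`.
-/

open Finset

namespace Finset

variable {α β : Type*}

theorem disjoint_disjSum_disjSum {s₁ s₂ : Finset α} {t₁ t₂ : Finset β} :
    Disjoint (s₁.disjSum t₁) (s₂.disjSum t₂) ↔ Disjoint s₁ s₂ ∧ Disjoint t₁ t₂ := by
  simp only [disjoint_left, Sum.forall, inl_mem_disjSum, inr_mem_disjSum]

theorem sum_mul_add_two_mul_add_sum_compl {ι R : Type*} [Fintype ι] [DecidableEq ι]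
    [CommSemiring R] (s : Finset ι) (a w : ι → R) (c : R) :
    ∑ i ∈ s, (a i * c + 2 * w i) + ∑ i ∈ sᶜ, w i =
      ∑ i ∈ s, w i + ((∑ i ∈ s, a i) * c + ∑ i, w i) := by
  rw [← sum_add_sum_compl s w, sum_add_distrib, ← mul_sum, sum_mul]
  ring

end Finset

theorem stmt_12_general (n : ℕ) (hn : 0 < n) (a : Fin n → ℕ) (t : ℕ)
    (X : Finset (Fin n)) (hX : ∑ i ∈ X, a i = t) :
    let A : Finset (Fin n ⊕ Fin n ⊕ Unit) :=
      X.image Sum.inl ∪ Xᶜ.image (fun i => Sum.inr (Sum.inl i))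
    let B : Finset (Fin n ⊕ Fin n ⊕ Unit) :=
      X.image (fun i => Sum.inr (Sum.inl i)) ∪ {Sum.inr (Sum.inr ())}
    Disjoint A B ∧ A.Nonempty ∧ B.Nonempty ∧
      ∑ j ∈ A, reductionElem n a t j = ∑ j ∈ B, reductionElem n a t j := by
  intro A B
  have hA : A = X.disjSum (Xᶜ.disjSum ∅) := by ext (i | i | u) <;> simp [A]
  have hB : B = (∅ : Finset (Fin n)).disjSum (X.disjSum {()}) := by ext (i | i | u) <;> simp [B]
  rw [hA, hB]
  refine ⟨?_, ?_, ⟨Sum.inr (Sum.inr ()), by simp⟩, ?_⟩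
  · simp only [disjoint_disjSum_disjSum, disjoint_compl_left, disjoint_empty_left,
      disjoint_empty_right, and_self]
  · rw [nonempty_iff_ne_empty, Ne, disjSum_eq_empty, disjSum_eq_empty]
    rintro ⟨hXe, hXce, -⟩
    have huniv : (univ : Finset (Fin n)) = ∅ := by rw [← union_compl X, hXce, union_empty, hXe]
    exact (univ_eq_empty_iff.mp huniv).false ⟨0, hn⟩
  · simp only [sum_disjSum, reductionElem, sum_empty, add_zero, zero_add, sum_singleton]
    rw [sum_mul_add_two_mul_add_sum_compl, hX]

theorem stmt_12 (n : ℕ) (hn : 0 < n) (a : Fin n → ℕ) (t : ℕ)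
    (hpos : ∀ i, 0 < a i) (X : Finset (Fin n)) (hX : ∑ i ∈ X, a i = t) :
    let A : Finset (Fin n ⊕ Fin n ⊕ Unit) :=
      X.image Sum.inl ∪ Xᶜ.image (fun i => Sum.inr (Sum.inl i))
    let B : Finset (Fin n ⊕ Fin n ⊕ Unit) :=
      X.image (fun i => Sum.inr (Sum.inl i)) ∪ {Sum.inr (Sum.inr ())}
    Disjoint A B ∧ A.Nonempty ∧ B.Nonempty ∧
      ∑ j ∈ A, reductionElem n a t j = ∑ j ∈ B, reductionElem n a t j :=
  stmt_12_general n hn a t X hX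
end

section
/- Let S be a finite set of positive integers with sum Σ(S), let M = Σ(S) + 1, and let Z = {M, 2M, 4M, …, 2^{k-1}M} for some k ≥ 1. Then S has two disjoint nonempty equal-sum subsets if and only if S ∪ Z has two disjoint nonempty equal-sum subsets. -/
lemma sum_two_pow_lt (s : Finset ℕ) (n : ℕ) (h : s ⊆ Finset.range n) :
    ∑ i ∈ s, 2 ^ i < 2 ^ n := by
  calc ∑ i ∈ s, 2 ^ i ≤ ∑ i ∈ Finset.range n, 2 ^ i :=
        Finset.sum_le_sum_of_subset h
    _ < 2 ^ n := by
        clear h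
        induction n with
        | zero => simp
        | succ n ih =>
          rw [Finset.sum_range_succ]
          have h2 : 2 ^ (n + 1) = 2 ^ n * 2 := pow_succ 2 n
          omega

lemma sum_two_pow_inj : ∀ (n : ℕ) (s t : Finset ℕ), s ⊆ Finset.range n →
    t ⊆ Finset.range n → ∑ i ∈ s, 2 ^ i = ∑ i ∈ t, 2 ^ i → s = t := by
  intro n
  induction n with
  | zero =>
    intro s t hs ht _
    simp only [Finset.range_zero, Finset.subset_empty] at hs ht
    rw [hs, ht]
  | succ n ih =>
    intro s t hs ht hsum
    have hsub : ∀ u : Finset ℕ, u ⊆ Finset.range (n+1) → n ∉ u → u ⊆ Finset.range n := by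
      intro u hu hn x hx
      have := hu hx
      simp only [Finset.mem_range] at this ⊢
      rcases Nat.lt_succ_iff_lt_or_eq.mp this with h | h
      · exact h
      · exact absurd (h ▸ hx) hn
    by_cases hns : n ∈ s <;> by_cases hnt : n ∈ t
    · have hes : s = insert n (s.erase n) := (Finset.insert_erase hns).symm
      have het : t = insert n (t.erase n) := (Finset.insert_erase hnt).symm
      have h1 : ∑ i ∈ s, 2 ^ i = 2 ^ n + ∑ i ∈ s.erase n, 2 ^ i :=
        (Finset.add_sum_erase s _ hns).symm
      have h2 : ∑ i ∈ t, 2 ^ i = 2 ^ n + ∑ i ∈ t.erase n, 2 ^ i :=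
        (Finset.add_sum_erase t _ hnt).symm
      have := ih (s.erase n) (t.erase n)
        (hsub _ (Finset.Subset.trans (Finset.erase_subset _ _) hs) (Finset.notMem_erase _ _))
        (hsub _ (Finset.Subset.trans (Finset.erase_subset _ _) ht) (Finset.notMem_erase _ _))
        (by omega)
      rw [hes, het, this]
    · exfalso
      have h1 : 2 ^ n ≤ ∑ i ∈ s, 2 ^ i := Finset.single_le_sum (fun i _ => Nat.zero_le _) hns
      have h2 := sum_two_pow_lt t n (hsub t ht hnt)
      omega
    · exfalso
      have h1 : 2 ^ n ≤ ∑ i ∈ t, 2 ^ i := Finset.single_le_sum (fun i _ => Nat.zero_le _) hnt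
      have h2 := sum_two_pow_lt s n (hsub s hs hns)
      omega
    · exact ih s t (hsub s hs hns) (hsub t ht hnt) hsum

theorem stmt_13 (S : Finset ℕ) (hpos : ∀ a ∈ S, 0 < a) (k : ℕ) (hk : 1 ≤ k)
    (M : ℕ) (hM : M = S.sum id + 1)
    (Z : Finset ℕ) (hZ : Z = (Finset.range k).image (fun i => 2 ^ i * M)) :
    (∃ A B : Finset ℕ, A ⊆ S ∧ B ⊆ S ∧ Disjoint A B ∧
        A.Nonempty ∧ B.Nonempty ∧ A.sum id = B.sum id) ↔
    (∃ A B : Finset ℕ, A ⊆ S ∪ Z ∧ B ⊆ S ∪ Z ∧ Disjoint A B ∧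
        A.Nonempty ∧ B.Nonempty ∧ A.sum id = B.sum id) := by
  have hMpos : 0 < M := by omega
  constructor
  · rintro ⟨A, B, hA, hB, hd, hAne, hBne, hs⟩
    exact ⟨A, B, hA.trans Finset.subset_union_left, hB.trans Finset.subset_union_left,
      hd, hAne, hBne, hs⟩
  · rintro ⟨A, B, hA, hB, hd, hAne, hBne, hs⟩
    -- key decomposition
    have key : ∀ C : Finset ℕ, C ⊆ S ∪ Z →
        ∃ s : Finset ℕ, s ⊆ Finset.range k ∧ C ∩ Z = s.image (fun i => 2 ^ i * M) ∧
          C.sum id = (C ∩ S).sum id + M * ∑ i ∈ s, 2 ^ i := by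
      intro C hC
      refine ⟨(Finset.range k).filter (fun i => 2 ^ i * M ∈ C), Finset.filter_subset _ _, ?_, ?_⟩
      · ext x
        simp only [Finset.mem_inter, hZ, Finset.mem_image, Finset.mem_filter, Finset.mem_range]
        constructor
        · rintro ⟨hxC, i, hi, rfl⟩; exact ⟨i, ⟨hi, hxC⟩, rfl⟩
        · rintro ⟨i, ⟨hi, hiC⟩, rfl⟩; exact ⟨hiC, i, hi, rfl⟩
      · have hinj : Set.InjOn (fun i => 2 ^ i * M) (Finset.range k) := by
          intro a _ b _ hab
          simp only at hab
          exact Nat.pow_right_injective (le_refl 2)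
            (Nat.eq_of_mul_eq_mul_right hMpos hab)
        have hCeq : C = (C ∩ S) ∪ (C ∩ Z) := by
          rw [← Finset.inter_union_distrib_left]
          exact (Finset.inter_eq_left.mpr hC).symm
        have hdisj : Disjoint (C ∩ S) (C ∩ Z) := by
          rw [Finset.disjoint_left]
          intro a haS haZ
          have h1 : a ∈ S := (Finset.mem_inter.mp haS).2
          have h2 : a ∈ Z := (Finset.mem_inter.mp haZ).2
          have hle : a ≤ S.sum id := Finset.single_le_sum (fun i _ => Nat.zero_le (id i)) h1
          rw [hZ] at h2
          simp only [Finset.mem_image, Finset.mem_range] at h2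
          obtain ⟨i, _, rfl⟩ := h2
          have : M ≤ 2 ^ i * M := Nat.le_mul_of_pos_left M (Nat.pow_pos (by norm_num))
          omega
        conv_lhs => rw [hCeq]
        rw [Finset.sum_union hdisj]
        congr 1
        rw [show C ∩ Z = ((Finset.range k).filter (fun i => 2 ^ i * M ∈ C)).image
              (fun i => 2 ^ i * M) from ?_]
        · rw [Finset.sum_image (fun a ha b hb h => hinj
            (Finset.filter_subset _ _ ha) (Finset.filter_subset _ _ hb) h)]
          rw [Finset.mul_sum]
          simp [mul_comm]
        · ext x
          simp only [Finset.mem_inter, hZ, Finset.mem_image, Finset.mem_filter, Finset.mem_range]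
          constructor
          · rintro ⟨hxC, i, hi, rfl⟩; exact ⟨i, ⟨hi, hxC⟩, rfl⟩
          · rintro ⟨i, ⟨hi, hiC⟩, rfl⟩; exact ⟨hiC, i, hi, rfl⟩
    obtain ⟨sA, hsA, hAZ, hAsum⟩ := key A hA
    obtain ⟨sB, hsB, hBZ, hBsum⟩ := key B hB
    -- bounds
    have hbound : ∀ C : Finset ℕ, (C ∩ S).sum id < M := by
      intro C
      have : (C ∩ S).sum id ≤ S.sum id :=
        Finset.sum_le_sum_of_subset Finset.inter_subset_right
      omega
    have hAb := hbound A
    have hBb := hbound B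
    -- mod M argument
    have hmod : (A ∩ S).sum id = (B ∩ S).sum id := by
      have h1 := congrArg (· % M) (hAsum ▸ hBsum ▸ hs)
      simp only [Nat.add_mul_mod_self_left] at h1
      rwa [Nat.mod_eq_of_lt hAb, Nat.mod_eq_of_lt hBb] at h1
    have hmul : M * ∑ i ∈ sA, 2 ^ i = M * ∑ i ∈ sB, 2 ^ i := by omega
    have hpow : ∑ i ∈ sA, 2 ^ i = ∑ i ∈ sB, 2 ^ i :=
      Nat.eq_of_mul_eq_mul_left hMpos hmul
    have hseq : sA = sB := sum_two_pow_inj k sA sB hsA hsB hpow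
    -- A ∩ Z = B ∩ Z, so both empty by disjointness
    have hZeq : A ∩ Z = B ∩ Z := by rw [hAZ, hBZ, hseq]
    have hZempty : A ∩ Z = ∅ := by
      by_contra h
      obtain ⟨x, hx⟩ := Finset.nonempty_iff_ne_empty.mpr h
      have hxA : x ∈ A := (Finset.mem_inter.mp hx).1
      have hxB : x ∈ B := (Finset.mem_inter.mp (hZeq ▸ hx)).1
      exact Finset.disjoint_left.mp hd hxA hxB
    have hAS : A ⊆ S := by
      intro x hx
      rcases Finset.mem_union.mp (hA hx) with h | h
      · exact h
      · exact absurd (Finset.mem_inter.mpr ⟨hx, h⟩) (by simp [hZempty])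
    have hBS : B ⊆ S := by
      intro x hx
      rcases Finset.mem_union.mp (hB hx) with h | h
      · exact h
      · exact absurd (Finset.mem_inter.mpr ⟨hx, h⟩) (by simp [← hZeq, hZempty])
    exact ⟨A, B, hAS, hBS, hd, hAne, hBne, hs⟩
end
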